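/- For any rooted tree $T$ and block size $B$, there exists a worst-case optimal layout (attaining $c(T,0)$) whose blocks form a convex partition, i.e., the intersection of each block with any root-to-leaf path is a (possibly empty) contiguous path. -/

import Mathlib

/-! Model of rooted trees, memory layouts into blocks, and the
worst-case root-to-leaf I/O cost `layoutCost t B k` (minimum over
layouts with at most `B` vertices per nonzero block and at most `k`
vertices in the free block `0`, of the maximum over root-to-leaf paths
of the number of distinct nonzero blocks on the path).
Vertices are addressed by their list of child indices from the root. -/

inductive RTree : Type where
  | node : List RTree → RTree

namespace RTree

mutual
  /-- Addresses of all vertices of the tree. The root has address `[]`. -/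
  def verts : RTree → List (List ℕ)
    | .node ts => [] :: vertsAux 0 ts
  def vertsAux : ℕ → List RTree → List (List ℕ)
    | _, [] => []
    | i, t :: ts => (t.verts.map (i :: ·)) ++ vertsAux (i + 1) ts
end

mutual
  /-- Addresses of all leaves; a root-to-leaf path consists of all
  prefixes (`List.inits`) of a leaf address. -/
  def paths : RTree → List (List ℕ)
    | .node [] => [[]]
    | .node (t :: ts) => pathsAux 0 (t :: ts)
  def pathsAux : ℕ → List RTree → List (List ℕ)
    | _, [] => []
    | i, t :: ts => (t.paths.map (i :: ·)) ++ pathsAux (i + 1) ts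
end

end RTree

/-- Number of vertices of `t` that layout `L` assigns to block `b`. -/
def blockCount (t : RTree) (L : List ℕ → ℕ) (b : ℕ) : ℕ :=
  (t.verts.filter (fun v => L v = b)).length

/-- `L` is a valid layout of `t` with block size `B` and at most `k`
vertices in the free block `0`. -/
def okLayout (t : RTree) (B k : ℕ) (L : List ℕ → ℕ) : Prop :=
  (∀ v ∈ t.verts, L v ≤ t.verts.length) ∧
  (∀ b : ℕ, b ≠ 0 → blockCount t L b ≤ B) ∧
  blockCount t L 0 ≤ k

/-- Cost of the root-to-leaf path ending at leaf address `p`: the number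
of distinct nonzero blocks among the vertices on the path. -/
def pathCost (L : List ℕ → ℕ) (p : List ℕ) : ℕ :=
  (((p.inits.map L).dedup).filter (fun b => b ≠ 0)).length

/-- Worst-case cost of layout `L` on tree `t`. -/
def maxCost (t : RTree) (L : List ℕ → ℕ) : ℕ :=
  (t.paths.map (pathCost L)).foldr max 0

/-- `c(T,k)`: worst-case optimal I/O cost of `t` with block size `B` and
`k` free slots in block `0`. -/
noncomputable def layoutCost (t : RTree) (B k : ℕ) : ℕ :=
  sInf {m : ℕ | ∃ L : List ℕ → ℕ, okLayout t B k L ∧ maxCost t L = m}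

/-- `L` is convex on `t`: on every root-to-leaf path, the vertices
assigned to any fixed block form a contiguous (possibly empty) subpath. -/
def convexLayout (t : RTree) (L : List ℕ → ℕ) : Prop :=
  ∀ p ∈ t.paths, ∀ b i j l : ℕ, i ≤ j → j ≤ l →
    l < (p.inits.map L).length →
    (p.inits.map L).getD i 0 = b → (p.inits.map L).getD l 0 = b →
    (p.inits.map L).getD j 0 = b

/-! Among the optimal layouts take one minimising the potential, the sum over all
vertices `v` of the number of blocks met on the root path of `v`. If it is not convex, some
root path leaves a block `P` and later returns to it at a vertex `w`. Right after the last
occurrence of `P` before `w` the path enters, at a vertex `z`, a block `c` it has not met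
before. Swapping the blocks of `z` and `w` keeps every block size, adds no block to any root
path (the parent of `z` already lies in `P`), and removes `c` from the root path of `z`: the
potential drops while no path becomes costlier. -/

open List

namespace RTree

theorem exists_eq_cons_of_mem_vertsAux {ts : List RTree} {i : ℕ} {y : List ℕ}
    (hy : y ∈ vertsAux i ts) : ∃ j tl, y = j :: tl ∧ i ≤ j := by
  induction ts generalizing i with
  | nil => simp [vertsAux] at hy
  | cons t ts ih =>
    simp only [vertsAux, mem_append, mem_map] at hy
    rcases hy with ⟨a, -, rfl⟩ | hy
    · exact ⟨i, a, rfl, le_rfl⟩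
    · obtain ⟨j, tl, rfl, hj⟩ := ih hy
      exact ⟨j, tl, rfl, by omega⟩

mutual
theorem verts_nodup : (t : RTree) → t.verts.Nodup
  | .node ts => by
    rw [verts]
    refine nodup_cons.2 ⟨fun h => ?_, vertsAux_nodup 0 ts⟩
    obtain ⟨_, _, h, -⟩ := exists_eq_cons_of_mem_vertsAux h
    cases h
theorem vertsAux_nodup : (i : ℕ) → (ts : List RTree) → (vertsAux i ts).Nodup
  | _, [] => by rw [vertsAux]; exact nodup_nil
  | i, t :: ts => by
    rw [vertsAux]
    refine Nodup.append ((verts_nodup t).map fun _ _ h => by injection h)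
      (vertsAux_nodup (i + 1) ts) ?_
    intro y hy₁ hy₂
    obtain ⟨a, -, rfl⟩ := mem_map.1 hy₁
    obtain ⟨j, tl, he, hj⟩ := exists_eq_cons_of_mem_vertsAux hy₂
    injection he
    omega
end

theorem nil_mem_verts (t : RTree) : [] ∈ t.verts := by
  obtain ⟨ts⟩ := t
  rw [verts]
  exact mem_cons_self

mutual
theorem mem_verts_of_prefix_of_mem_paths : (t : RTree) → ∀ p ∈ t.paths, ∀ y, y <+: p →
    y ∈ t.verts
  | .node [] => by
    intro p hp y hy
    rw [paths, mem_singleton] at hp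
    subst hp
    rw [prefix_nil.1 hy]
    exact nil_mem_verts _
  | .node (t :: ts) => by
    intro p hp y hy
    rw [paths] at hp
    rcases eq_nil_or_mem_vertsAux_of_prefix_of_mem_pathsAux 0 (t :: ts) p hp y hy with rfl | h
    · exact nil_mem_verts _
    · rw [verts]; exact mem_cons_of_mem _ h
theorem eq_nil_or_mem_vertsAux_of_prefix_of_mem_pathsAux : (i : ℕ) → (ts : List RTree) →
    ∀ p ∈ pathsAux i ts, ∀ y, y <+: p → y = [] ∨ y ∈ vertsAux i ts
  | _, [] => by intro p hp; simp [pathsAux] at hp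
  | i, t :: ts => by
    intro p hp y hy
    rw [pathsAux] at hp
    rw [vertsAux]
    rcases mem_append.1 hp with hp | hp
    · obtain ⟨p', hp', rfl⟩ := mem_map.1 hp
      match y, hy with
      | [], _ => exact Or.inl rfl
      | a :: y', hy =>
        obtain ⟨rfl, hy'⟩ := cons_prefix_cons.1 hy
        exact Or.inr (mem_append_left _ (mem_map.2
          ⟨y', mem_verts_of_prefix_of_mem_paths t p' hp' y' hy', rfl⟩))
    · exact (eq_nil_or_mem_vertsAux_of_prefix_of_mem_pathsAux (i + 1) ts p hp y hy).imp_right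
        (mem_append_right _)
end

end RTree

lemma blockCount_le_one_of_injOn {t : RTree} {L : List ℕ → ℕ}
    (hL : Set.InjOn L {v | v ∈ t.verts}) (b : ℕ) : blockCount t L b ≤ 1 := by
  classical
  rw [blockCount, ← toFinset_card_of_nodup ((RTree.verts_nodup t).filter _), Finset.card_le_one]
  intro v hv v' hv'
  simp only [mem_toFinset, mem_filter, decide_eq_true_eq] at hv hv'
  exact hL hv.1 hv'.1 (hv.2.trans hv'.2.symm)

/-- Every vertex in a block of its own. -/
lemma exists_okLayout (t : RTree) {B : ℕ} (hB : 1 ≤ B) : ∃ L, okLayout t B 0 L := by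
  classical
  refine ⟨fun v => t.verts.idxOf v + 1, fun v hv => ?_, fun b _ => ?_, ?_⟩
  · exact idxOf_lt_length_iff.2 hv
  · refine (blockCount_le_one_of_injOn (fun v hv v' _ h => ?_) b).trans hB
    exact (idxOf_inj hv).1 (Nat.succ_injective h)
  · simp [blockCount]

lemma blockCount_comp_swap {t : RTree} (L : List ℕ → ℕ) {z w : List ℕ}
    (hz : z ∈ t.verts) (hw : w ∈ t.verts) (b : ℕ) :
    blockCount t (L ∘ Equiv.swap z w) b = blockCount t L b := by
  have hperm : (t.verts.map (Equiv.swap z w)).Perm t.verts := by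
    refine (perm_ext_iff_of_nodup ((RTree.verts_nodup t).map (Equiv.injective _))
      (RTree.verts_nodup t)).2 fun v => ?_
    rw [mem_map_of_involutive (Equiv.swap_apply_self z w)]
    rcases eq_or_ne v z with rfl | hvz
    · simp [hz, hw]
    rcases eq_or_ne v w with rfl | hvw
    · simp [hz, hw]
    · rw [Equiv.swap_apply_of_ne_of_ne hvz hvw]
  simp only [blockCount, ← countP_eq_length_filter]
  exact (countP_map (p := fun v => decide (L v = b))).symm.trans (hperm.countP_eq _)

lemma okLayout_comp_swap {t : RTree} {B k : ℕ} {L : List ℕ → ℕ} (hL : okLayout t B k L)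
    {z w : List ℕ} (hz : z ∈ t.verts) (hw : w ∈ t.verts) :
    okLayout t B k (L ∘ Equiv.swap z w) := by
  obtain ⟨hrange, hsize, hfree⟩ := hL
  refine ⟨fun v hv => hrange _ ?_, fun b hb => ?_, ?_⟩
  · rcases eq_or_ne v z with rfl | hvz
    · simpa using hw
    rcases eq_or_ne v w with rfl | hvw
    · simpa using hz
    · rwa [Equiv.swap_apply_of_ne_of_ne hvz hvw]
  · exact (blockCount_comp_swap L hz hw b).trans_le (hsize b hb)
  · exact (blockCount_comp_swap L hz hw 0).trans_le hfree

def pathBlocks (L : List ℕ → ℕ) (x : List ℕ) : Finset ℕ :=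
  (x.inits.map L).toFinset

lemma mem_pathBlocks {L : List ℕ → ℕ} {x : List ℕ} {b : ℕ} :
    b ∈ pathBlocks L x ↔ ∃ y, y <+: x ∧ L y = b := by
  simp [pathBlocks]

lemma pathCost_eq_card (L : List ℕ → ℕ) (p : List ℕ) :
    pathCost L p = ((pathBlocks L p).filter (· ≠ 0)).card := by
  rw [pathCost, pathBlocks, ← ((nodup_dedup _).filter _).dedup, ← card_toFinset,
    toFinset_filter]
  congr 1
  ext
  simp

lemma pathCost_le_of_subset {L L' : List ℕ → ℕ} {p : List ℕ}
    (h : pathBlocks L' p ⊆ pathBlocks L p) : pathCost L' p ≤ pathCost L p := by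
  rw [pathCost_eq_card, pathCost_eq_card]
  exact Finset.card_le_card (Finset.filter_subset_filter _ h)

lemma maxCost_le_of_forall {t : RTree} {L L' : List ℕ → ℕ}
    (h : ∀ p ∈ t.paths, pathCost L' p ≤ pathCost L p) : maxCost t L' ≤ maxCost t L := by
  refine max_le_of_forall_le _ _ fun n hn => ?_
  obtain ⟨p, hp, rfl⟩ := mem_map.1 hn
  exact le_max_of_le (mem_map_of_mem hp) (h p hp)

def potential (t : RTree) (L : List ℕ → ℕ) : ℕ :=
  (t.verts.map fun x => (pathBlocks L x).card).sum

lemma potential_lt {t : RTree} {L L' : List ℕ → ℕ}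
    (h : ∀ x ∈ t.verts, pathBlocks L' x ⊆ pathBlocks L x)
    (hlt : ∃ x ∈ t.verts, pathBlocks L' x ⊂ pathBlocks L x) : potential t L' < potential t L :=
  sum_lt_sum _ _ (fun x hx => Finset.card_le_card (h x hx))
    (hlt.imp fun _ hx => ⟨hx.1, Finset.card_lt_card hx.2⟩)

lemma pathBlocks_comp_swap_subset {L : List ℕ → ℕ} {u z w : List ℕ} (huz : u <+: z)
    (hzw : z <+: w) (hu : L u = L w) (x : List ℕ) :
    pathBlocks (L ∘ Equiv.swap z w) x ⊆ pathBlocks L x := by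
  intro b hb
  obtain ⟨y, hyx, rfl⟩ := mem_pathBlocks.1 hb
  rw [mem_pathBlocks]
  rcases eq_or_ne y z with rfl | hyz
  · by_cases hwx : w <+: x
    · exact ⟨w, hwx, by simp⟩
    · exact ⟨u, huz.trans hyx, by simp [hu]⟩
  rcases eq_or_ne y w with rfl | hyw
  · exact ⟨z, hzw.trans hyx, by simp⟩
  · exact ⟨y, hyx, by simp [Equiv.swap_apply_of_ne_of_ne hyz hyw]⟩

lemma mem_pathBlocks_take {L : List ℕ → ℕ} {p : List ℕ} {n b : ℕ} :
    b ∈ pathBlocks L (p.take n) ↔ ∃ a ≤ n, L (p.take a) = b := by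
  rw [mem_pathBlocks]
  constructor
  · rintro ⟨y, hy, rfl⟩
    refine ⟨y.length, hy.length_le.trans (length_take_le _ _), ?_⟩
    rw [← prefix_iff_eq_take.1 (hy.trans (take_prefix _ _))]
  · rintro ⟨a, ha, rfl⟩
    exact ⟨_, take_prefix_take_left ha, rfl⟩

lemma getD_map_inits (L : List ℕ → ℕ) {p : List ℕ} {a : ℕ} (ha : a ≤ p.length) :
    (p.inits.map L).getD a 0 = L (p.take a) := by
  rw [getD_eq_getElem _ _ (by simp; omega)]
  simp

lemma exists_new_value_before_return (f : ℕ → ℕ) {i j l : ℕ} (hij : i < j) (hjl : j < l)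
    (hi : f i = f l) (hj : f j ≠ f l) :
    ∃ k m, k + 1 < m ∧ m ≤ l ∧ f k = f m ∧ f (k + 1) ≠ f m ∧ ∀ a ≤ k, f a ≠ f (k + 1) := by
  induction l using Nat.strong_induction_on generalizing i j with
  | _ l ih =>
  set k := Nat.findGreatest (fun a => f a = f l) (l - 1)
  have hk : f k = f l := Nat.findGreatest_spec (P := fun a => f a = f l) (m := i) (by omega) hi
  have hkl : k ≤ l - 1 := Nat.findGreatest_le _
  have hik : i ≤ k := Nat.le_findGreatest (by omega) hi
  rcases eq_or_lt_of_le hkl with hkl | hkl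
  · have hjk : j < k := lt_of_le_of_ne (by omega) fun h => hj (h ▸ hk)
    obtain ⟨k', m, h⟩ := ih k (by omega) hij hjk (hi.trans hk.symm) (hk ▸ hj)
    exact ⟨k', m, h.1, by omega, h.2.2⟩
  have hk1 : f (k + 1) ≠ f l :=
    Nat.findGreatest_is_greatest (P := fun a => f a = f l) (n := l - 1) (k := k + 1)
      (by omega) (by omega)
  by_cases hnew : ∀ a ≤ k, f a ≠ f (k + 1)
  · exact ⟨k, l, by omega, le_rfl, hk, hk1, hnew⟩
  push Not at hnew
  obtain ⟨a, hak, ha⟩ := hnew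
  have hak : a < k := lt_of_le_of_ne hak (by rintro rfl; exact hk1 (ha ▸ hk))
  obtain ⟨k', m, h⟩ := ih (k + 1) (by omega) hak (Nat.lt_succ_self k) ha
    (by rw [hk]; exact hk1.symm)
  exact ⟨k', m, h.1, by omega, h.2.2⟩

lemma exists_potential_lt_of_not_convexLayout {t : RTree} {B k : ℕ} {L : List ℕ → ℕ}
    (hL : okLayout t B k L) (hconv : ¬ convexLayout t L) :
    ∃ L', okLayout t B k L' ∧ maxCost t L' ≤ maxCost t L ∧ potential t L' < potential t L := by
  simp only [convexLayout, not_forall] at hconv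
  obtain ⟨p, hp, b, i, j, l, hij, hjl, hl, hi, hlb, hj⟩ := hconv
  have hlp : l ≤ p.length := by simp only [length_map, length_inits] at hl; omega
  rw [getD_map_inits L (by omega)] at hi hj
  rw [getD_map_inits L hlp] at hlb
  subst hlb
  have hij : i < j := lt_of_le_of_ne hij fun h => hj (h ▸ hi)
  have hjl : j < l := lt_of_le_of_ne hjl fun h => hj (h ▸ rfl)
  obtain ⟨n, m, hnm, hml, hret, hne, hnew⟩ :=
    exists_new_value_before_return (fun a => L (p.take a)) hij hjl hi hj
  have hlen : ∀ a ≤ m, (p.take a).length = a := fun a ha => length_take_of_le (by omega)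
  set z := p.take (n + 1)
  set w := p.take m
  have hz : z ∈ t.verts := t.mem_verts_of_prefix_of_mem_paths p hp z (take_prefix _ _)
  have hw : w ∈ t.verts := t.mem_verts_of_prefix_of_mem_paths p hp w (take_prefix _ _)
  have hsub := pathBlocks_comp_swap_subset (take_prefix_take_left (Nat.le_succ n))
    (take_prefix_take_left hnm.le) hret
  refine ⟨L ∘ Equiv.swap z w, okLayout_comp_swap hL hz hw,
    maxCost_le_of_forall fun q _ => pathCost_le_of_subset (hsub q),
    potential_lt (fun x _ => hsub x) ⟨z, hz, ?_⟩⟩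
  refine (Finset.ssubset_iff_of_subset (hsub z)).2
    ⟨L z, mem_pathBlocks.2 ⟨z, prefix_rfl, rfl⟩, ?_⟩
  rw [mem_pathBlocks_take]
  rintro ⟨a, ha, hLa⟩
  rcases eq_or_lt_of_le ha with rfl | ha
  · exact hne (by simpa using hLa.symm)
  · have hz' : p.take a ≠ z := fun h => by
      have := congrArg length h
      rw [hlen a (by omega), hlen (n + 1) (by omega)] at this
      omega
    have hw' : p.take a ≠ w := fun h => by
      have := congrArg length h
      rw [hlen a (by omega), hlen m le_rfl] at this
      omega
    rw [Function.comp_apply, Equiv.swap_apply_of_ne_of_ne hz' hw'] at hLa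
    exact hnew a (by omega) hLa

lemma exists_convexLayout_maxCost_le {t : RTree} {B k : ℕ} {L : List ℕ → ℕ}
    (hL : okLayout t B k L) :
    ∃ L', okLayout t B k L' ∧ maxCost t L' ≤ maxCost t L ∧ convexLayout t L' := by
  induction h : potential t L using Nat.strong_induction_on generalizing L with
  | _ n ih =>
  by_cases hconv : convexLayout t L
  · exact ⟨L, hL, le_rfl, hconv⟩
  obtain ⟨L', hL', hcost, hpot⟩ := exists_potential_lt_of_not_convexLayout hL hconv
  obtain ⟨L'', hL'', hcost', hconv''⟩ := ih _ (h ▸ hpot) hL' rfl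
  exact ⟨L'', hL'', hcost'.trans hcost, hconv''⟩

lemma exists_maxCost_eq_layoutCost {t : RTree} {B k : ℕ} (h : ∃ L, okLayout t B k L) :
    ∃ L, okLayout t B k L ∧ maxCost t L = layoutCost t B k := by
  obtain ⟨L, hL⟩ := h
  exact Nat.sInf_mem (s := {m | ∃ L, okLayout t B k L ∧ maxCost t L = m}) ⟨_, L, hL, rfl⟩

/-- There is a worst-case optimal layout (attaining `c(T,0)`) whose
blocks form a convex partition. -/
theorem stmt9 (t : RTree) (B : ℕ) (hB : 1 ≤ B) :
    ∃ L : List ℕ → ℕ, okLayout t B 0 L ∧ maxCost t L = layoutCost t B 0 ∧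
      convexLayout t L := by
  obtain ⟨L₀, hL₀, hopt⟩ := exists_maxCost_eq_layoutCost (exists_okLayout t hB)
  obtain ⟨L, hL, hle, hconv⟩ := exists_convexLayout_maxCost_le hL₀
  exact ⟨L, hL, le_antisymm (hle.trans_eq hopt) (Nat.sInf_le ⟨L, hL, rfl⟩), hconv⟩
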